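/- arXiv:2007.04698 — 7 statements merged into one kernel-verified Lean document; each statement's English description precedes it below -/
import Mathlib

section
/- In a chordal graph G (a graph with no induced cycles of length at least 4), if C is a cycle in G and uv is an edge of C, then u and v have a common neighbor among the vertices of C. -/
open SimpleGraph

/-- A graph is chordal if every cycle of length at least 4 has a chord:
an edge between two vertices of the cycle that is not an edge of the cycle. -/
def Chordal {V : Type*} (G : SimpleGraph V) : Prop :=
  ∀ ⦃v : V⦄ (c : G.Walk v v), c.IsCycle → 4 ≤ c.length →
    ∃ x y, x ∈ c.support ∧ y ∈ c.support ∧ G.Adj x y ∧ s(x, y) ∉ c.edges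

/-- The underlying relation of the `k`-sun: `Sum.inr` vertices form the clique
`{y_1, …, y_k}`, `Sum.inl` vertices form the independent set `{x_1, …, x_k}`,
and `x_i` is adjacent exactly to `y_i` and `y_{(i mod k)+1}`. -/
def sunRel (k : ℕ) : (Fin k ⊕ Fin k) → (Fin k ⊕ Fin k) → Prop
  | Sum.inr _, Sum.inr _ => True
  | Sum.inl i, Sum.inr j => j.val = i.val ∨ j.val = (i.val + 1) % k
  | _, _ => False

/-- The `k`-sun graph. -/
def sunGraph (k : ℕ) : SimpleGraph (Fin k ⊕ Fin k) := SimpleGraph.fromRel (sunRel k)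

/-- A graph is strongly chordal if it is chordal and has no induced `k`-sun for `k ≥ 3`. -/
def StronglyChordal {V : Type*} (G : SimpleGraph V) : Prop :=
  Chordal G ∧ ∀ k, 3 ≤ k → IsEmpty (sunGraph k ↪g G)

/-- The graph obtained from `G` by adding a universal vertex (`none`). -/
def addUniversal {V : Type*} (G : SimpleGraph V) : SimpleGraph (Option V) :=
  SimpleGraph.fromRel (fun x y =>
    match x, y with
    | some a, some b => G.Adj a b
    | _, _ => True)

/-- The graph obtained from `G` by adding a true twin (`none`) of the vertex `u`. -/
def addTwin {V : Type*} (G : SimpleGraph V) (u : V) : SimpleGraph (Option V) :=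
  SimpleGraph.fromRel (fun x y =>
    match x, y with
    | some a, some b => G.Adj a b
    | none, some a => a = u ∨ G.Adj u a
    | some a, none => a = u ∨ G.Adj u a
    | none, none => False)

/-- A vertex is simplicial if its neighborhood is a clique. -/
def IsSimplicial {V : Type*} (G : SimpleGraph V) (v : V) : Prop :=
  ∀ ⦃a b : V⦄, G.Adj v a → G.Adj v b → a ≠ b → G.Adj a b

/-- `Q` is (the vertex set of) a connected component of `G − A`. -/
def IsCompOf {V : Type*} (G : SimpleGraph V) (A Q : Set V) : Prop :=
  Disjoint Q A ∧ (G.induce Q).Connected ∧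
    ∀ a ∈ Q, ∀ b, b ∉ A → G.Adj a b → b ∈ Q

/-- The set of neighbors of a vertex set `Q`: vertices outside `Q` adjacent to some
vertex of `Q`. -/
def setNbhd {V : Type*} (G : SimpleGraph V) (Q : Set V) : Set V :=
  {b | b ∉ Q ∧ ∃ a ∈ Q, G.Adj a b}

/-- A cycle `c` is extendable if there is a cycle whose vertex set consists of the
vertices of `c` together with exactly one additional vertex. -/
def CycleExtendable {V : Type*} (G : SimpleGraph V) {v : V} (c : G.Walk v v) : Prop :=
  ∃ (w : V) (u : V) (c' : G.Walk u u), c'.IsCycle ∧ w ∉ c.support ∧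
    ∀ y, y ∈ c'.support ↔ (y ∈ c.support ∨ y = w)

/-!
Induction on the length of the cycle. A triangle is its own witness: the third vertex is
adjacent to both ends of any edge. A longer cycle has a chord `xy`, which cuts it into two
shorter cycles whose vertices lie on the original one and which between them carry all its
edges; the edge `uw` lies on one of them, and induction applies there.
-/

namespace SimpleGraph.Walk

variable {V : Type*} {G : SimpleGraph V}

lemma exists_adj_adj_of_length_eq_three {v u w : V} (c : G.Walk v v) (hc : c.length = 3)
    (huw : s(u, w) ∈ c.edges) : ∃ x ∈ c.support, G.Adj u x ∧ G.Adj w x := by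
  have adj_of_edge_eq : ∀ {p q z : V}, s(u, w) = s(p, q) → G.Adj p z → G.Adj q z →
      G.Adj u z ∧ G.Adj w z := by
    rintro p q z h hp hq
    rcases Sym2.eq_iff.1 h with ⟨rfl, rfl⟩ | ⟨rfl, rfl⟩ <;> tauto
  match c, hc with
  | cons h₁ (cons h₂ (cons h₃ nil)), _ =>
    simp only [edges_cons, edges_nil, List.mem_cons, List.not_mem_nil, or_false] at huw
    rcases huw with h | h | h
    · exact ⟨_, by simp, adj_of_edge_eq h h₃.symm h₂⟩
    · exact ⟨_, by simp, adj_of_edge_eq h h₁.symm h₃⟩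
    · exact ⟨_, by simp, adj_of_edge_eq h h₂.symm h₁⟩

lemma IsCycle.exists_isCycle_isCycle_of_chord_of_start {x y : V} {c : G.Walk x x}
    (hc : c.IsCycle) (hy : y ∈ c.support) (hxy : G.Adj x y) (hchord : s(x, y) ∉ c.edges) :
    ∃ (c₁ : G.Walk y y) (c₂ : G.Walk x x), c₁.IsCycle ∧ c₂.IsCycle ∧
      c₁.length < c.length ∧ c₂.length < c.length ∧ c₁.support ⊆ c.support ∧
      c₂.support ⊆ c.support ∧ c.edges ⊆ c₁.edges ++ c₂.edges := by
  classical
  set p := c.takeUntil y hy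
  set q := c.dropUntil y hy
  have hpq : p.append q = c := c.take_spec hy
  have hlen : p.length + q.length = c.length := by rw [← hpq, length_append]
  have hedges : c.edges = p.edges ++ q.edges := by rw [← hpq, edges_append]
  have hp : p.IsPath := hc.isPath_takeUntil hy
  have hq : q.IsPath := (hpq ▸ hc).isPath_of_append_right (not_nil_of_ne hxy.ne)
  have hc₁ : (cons hxy.symm p).IsCycle := (cons_isCycle_iff p hxy.symm).2
    ⟨hp, fun h ↦ hchord (hedges ▸ List.mem_append_left _ (Sym2.eq_swap ▸ h))⟩
  have hc₂ : (cons hxy q).IsCycle := (cons_isCycle_iff q hxy).2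
    ⟨hq, fun h ↦ hchord (hedges ▸ List.mem_append_right _ h)⟩
  -- Closed up by the chord, each piece is a cycle, so the other piece is shorter than `c`.
  have hl₁ := hc₁.three_le_length
  have hl₂ := hc₂.three_le_length
  simp only [length_cons] at hl₁ hl₂
  refine ⟨_, _, hc₁, hc₂, by simp only [length_cons]; omega, by simp only [length_cons]; omega,
    ?_, ?_, ?_⟩
  · rw [support_cons, List.cons_subset]
    exact ⟨hy, c.support_takeUntil_subset_support hy⟩
  · rw [support_cons, List.cons_subset]
    exact ⟨c.start_mem_support, c.support_dropUntil_subset_support hy⟩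
  · intro e he
    rw [hedges, List.mem_append] at he
    simp only [edges_cons, List.mem_append, List.mem_cons]
    tauto

lemma IsCycle.exists_isCycle_isCycle_of_chord {v x y : V} {c : G.Walk v v} (hc : c.IsCycle)
    (hx : x ∈ c.support) (hy : y ∈ c.support) (hxy : G.Adj x y) (hchord : s(x, y) ∉ c.edges) :
    ∃ (c₁ : G.Walk y y) (c₂ : G.Walk x x), c₁.IsCycle ∧ c₂.IsCycle ∧
      c₁.length < c.length ∧ c₂.length < c.length ∧ c₁.support ⊆ c.support ∧
      c₂.support ⊆ c.support ∧ c.edges ⊆ c₁.edges ++ c₂.edges := by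
  classical
  have hperm := (c.rotate_edges x hx).perm
  obtain ⟨c₁, c₂, hc₁, hc₂, hl₁, hl₂, hs₁, hs₂, hedges⟩ :=
    (hc.rotate hx).exists_isCycle_isCycle_of_chord_of_start (by simpa using hy) hxy
      (fun h ↦ hchord (hperm.mem_iff.1 h))
  refine ⟨c₁, c₂, hc₁, hc₂, by simpa using hl₁, by simpa using hl₂, ?_, ?_, ?_⟩
  · exact fun z hz ↦ (c.mem_support_rotate_iff x hx).1 (hs₁ hz)
  · exact fun z hz ↦ (c.mem_support_rotate_iff x hx).1 (hs₂ hz)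
  · exact fun e he ↦ hedges (hperm.mem_iff.2 he)

end SimpleGraph.Walk

/-- In a chordal graph, the endpoints of any edge of a cycle have a common neighbor
among the vertices of the cycle. -/
theorem stmt0 {V : Type*} (G : SimpleGraph V) (hG : Chordal G)
    {v : V} (c : G.Walk v v) (hc : c.IsCycle) (u w : V) (huw : s(u, w) ∈ c.edges) :
    ∃ x ∈ c.support, G.Adj u x ∧ G.Adj w x := by
  induction hn : c.length using Nat.strong_induction_on generalizing v with
  | _ n ih =>
  by_cases h4 : 4 ≤ n
  · obtain ⟨x, y, hx, hy, hxy, hchord⟩ := hG c hc (hn ▸ h4)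
    obtain ⟨c₁, c₂, hc₁, hc₂, hl₁, hl₂, hs₁, hs₂, hedges⟩ :=
      hc.exists_isCycle_isCycle_of_chord hx hy hxy hchord
    rcases List.mem_append.1 (hedges huw) with h | h
    · obtain ⟨z, hz, huz, hwz⟩ := ih _ (hn ▸ hl₁) c₁ hc₁ h rfl
      exact ⟨z, hs₁ hz, huz, hwz⟩
    · obtain ⟨z, hz, huz, hwz⟩ := ih _ (hn ▸ hl₂) c₂ hc₂ h rfl
      exact ⟨z, hs₂ hz, huz, hwz⟩
  · exact c.exists_adj_adj_of_length_eq_three (by have := hc.three_le_length; omega) huw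
end

section
/- Adding a true twin of an existing vertex to a strongly chordal graph yields a strongly chordal graph. -/
open SimpleGraph

/-! The vertices `none` and `some u` of `addTwin G u` are true twins, so swapping them is an
automorphism, and all other vertices come from `G`. Hence a cycle or an induced sun that misses
one of the twins lies, up to this automorphism, in the copy of `G`. A sun cannot contain
both twins, since distinct vertices of a `k`-sun with `k ≥ 3` are never true twins. A cycle of
length at least 4 through both twins has the chord joining them unless they are consecutive on
the cycle; in that case the other cycle-neighbour of one twin is adjacent to the other twin,
and this edge is a chord because the cycle is not a triangle. -/

namespace SimpleGraph

variable {U V W : Type*} {H : SimpleGraph U} {G : SimpleGraph V} {G' : SimpleGraph W}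

def Walk.HasChord {v : V} (c : G.Walk v v) : Prop :=
  ∃ x y, x ∈ c.support ∧ y ∈ c.support ∧ G.Adj x y ∧ s(x, y) ∉ c.edges

namespace Walk

variable {v : V}

theorem hasChord_map_iff (f : G ↪g G') (c : G.Walk v v) :
    (c.map f.toHom).HasChord ↔ c.HasChord := by
  simp only [HasChord, support_map, edges_map, List.mem_map]
  constructor
  · rintro ⟨_, _, ⟨x, hx, rfl⟩, ⟨y, hy, rfl⟩, hadj, hne⟩
    exact ⟨x, y, hx, hy, f.map_adj_iff.1 hadj, fun he => hne ⟨_, he, rfl⟩⟩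
  · rintro ⟨x, y, hx, hy, hadj, hne⟩
    refine ⟨f x, f y, ⟨x, hx, rfl⟩, ⟨y, hy, rfl⟩, f.map_adj_iff.2 hadj, ?_⟩
    rintro ⟨e, he, hfe⟩
    rw [← Sym2.map_mk] at hfe
    exact hne (Sym2.map.injective f.injective hfe ▸ he)

theorem hasChord_rotate_iff [DecidableEq V] {c : G.Walk v v} {u : V} (hu : u ∈ c.support) :
    (c.rotate u hu).HasChord ↔ c.HasChord := by
  simp only [HasChord, mem_support_rotate_iff, (c.rotate_edges u hu).mem_iff]

theorem edges_eq_cons_edges_tail {u : V} {p : G.Walk u v} (hp : ¬ p.Nil) :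
    p.edges = s(u, p.snd) :: p.tail.edges := by
  conv_lhs => rw [← p.cons_tail_eq hp]
  rfl

theorem IsCycle.penultimate_tail {c : G.Walk v v} (hc : c.IsCycle) :
    c.tail.penultimate = c.penultimate := by
  have := hc.three_le_length
  simp only [penultimate, getVert_tail, length_tail]
  congr 1
  omega

theorem IsCycle.eq_snd_or_eq_penultimate_of_mem_edges {c : G.Walk v v} (hc : c.IsCycle)
    {w : V} (h : s(v, w) ∈ c.edges) : w = c.snd ∨ w = c.penultimate := by
  rw [edges_eq_cons_edges_tail hc.not_nil, List.mem_cons, Sym2.eq_iff] at h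
  rcases h with (⟨-, rfl⟩ | ⟨h, -⟩) | h
  · exact Or.inl rfl
  · exact absurd h (c.adj_snd hc.not_nil).ne
  · exact Or.inr (hc.penultimate_tail ▸ hc.isPath_tail.eq_penultimate_of_mem_edges h)

theorem IsCycle.mk_snd_penultimate_notMem_edges {c : G.Walk v v} (hc : c.IsCycle)
    (hlen : 4 ≤ c.length) : s(c.snd, c.penultimate) ∉ c.edges := by
  intro h
  rw [edges_eq_cons_edges_tail hc.not_nil, List.mem_cons, Sym2.eq_iff] at h
  rcases h with (⟨h, -⟩ | ⟨-, h⟩) | h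
  · exact (c.adj_snd hc.not_nil).ne h.symm
  · exact (c.adj_penultimate hc.not_nil).ne h
  · have h2 : c.penultimate = c.getVert 2 := by
      simpa using hc.isPath_tail.eq_snd_of_mem_edges h
    have := hc.getVert_injOn (by simp; omega) (by simp; omega) h2
    omega

end Walk

def TrueTwins (G : SimpleGraph V) (z w : V) : Prop :=
  insert z (G.neighborSet z) = insert w (G.neighborSet w)

namespace TrueTwins

variable {z w : V}

theorem mem_iff (h : G.TrueTwins z w) (t : V) : (t = z ∨ G.Adj z t) ↔ (t = w ∨ G.Adj w t) :=
  Set.ext_iff.1 h t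

theorem symm (h : G.TrueTwins z w) : G.TrueTwins w z := Eq.symm h

theorem adj_iff (h : G.TrueTwins z w) {t : V} (hz : t ≠ z) (hw : t ≠ w) :
    G.Adj z t ↔ G.Adj w t := by
  simpa [hz, hw] using h.mem_iff t

theorem adj (h : G.TrueTwins z w) (hne : z ≠ w) : G.Adj z w := by
  simpa [hne.symm] using h.mem_iff w

theorem comap (f : G ↪g G') (h : G'.TrueTwins (f z) (f w)) : G.TrueTwins z w := by
  ext t
  simpa [f.injective.eq_iff] using h.mem_iff (f t)

theorem adj_swap [DecidableEq V] (h : G.TrueTwins z w) {a b : V} (hab : G.Adj a b) :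
    G.Adj (Equiv.swap z w a) (Equiv.swap z w b) := by
  rw [Equiv.swap_apply_def, Equiv.swap_apply_def]
  split_ifs <;> subst_vars <;> grind [Adj.symm, Adj.ne, h.adj_iff]

def swapIso [DecidableEq V] (h : G.TrueTwins z w) : G ≃g G where
  toEquiv := Equiv.swap z w
  map_rel_iff' := ⟨fun hab => by simpa using h.adj_swap hab, h.adj_swap⟩

end TrueTwins

theorem Walk.IsCycle.hasChord_of_trueTwins {v z w : V} {c : G.Walk v v} (hc : c.IsCycle)
    (hlen : 4 ≤ c.length) (htw : G.TrueTwins z w) (he : s(z, w) ∈ c.edges) : c.HasChord := by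
  classical
  have hz : z ∈ c.support := c.fst_mem_support_of_mem_edges he
  rw [← Walk.hasChord_rotate_iff hz]
  set d := c.rotate z hz
  have hd : d.IsCycle := hc.rotate hz
  have hdlen : 4 ≤ d.length := by simpa [d] using hlen
  have hadj_snd : G.Adj z d.snd := d.adj_snd hd.not_nil
  have hadj_pen : G.Adj z d.penultimate := (d.adj_penultimate hd.not_nil).symm
  refine ⟨d.snd, d.penultimate, d.getVert_mem_support _, d.getVert_mem_support _, ?_,
    hd.mk_snd_penultimate_notMem_edges hdlen⟩
  rcases hd.eq_snd_or_eq_penultimate_of_mem_edges ((c.rotate_edges z hz).mem_iff.2 he) with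
    rfl | rfl
  · exact (htw.adj_iff hadj_pen.ne' hd.snd_ne_penultimate.symm).1 hadj_pen
  · exact ((htw.adj_iff hadj_snd.ne' hd.snd_ne_penultimate).1 hadj_snd).symm

theorem nonempty_embedding_of_forall_mem_range (ψ : G ↪g G') (φ : H ↪g G')
    (h : ∀ x, φ x ∈ Set.range ψ) : Nonempty (H ↪g G) := by
  choose g hg using h
  refine ⟨⟨⟨g, fun a b hab => φ.injective ?_⟩, fun {a b} => ?_⟩⟩
  · rw [← hg a, ← hg b, hab]
  · change G.Adj (g a) (g b) ↔ H.Adj a b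
    rw [← ψ.map_adj_iff, hg, hg, φ.map_adj_iff]

end SimpleGraph

open SimpleGraph

theorem Nat.mod_eq_self_or_sub {n k : ℕ} (h : n < 2 * k) :
    n % k = n ∧ n < k ∨ n % k = n - k ∧ k ≤ n := by
  rcases lt_or_ge n k with hn | hn
  · exact Or.inl ⟨Nat.mod_eq_of_lt hn, hn⟩
  · exact Or.inr ⟨by rw [Nat.mod_eq_sub_mod hn, Nat.mod_eq_of_lt (by omega)], hn⟩

section Sun

variable {k : ℕ}

@[simp] theorem sunGraph_adj_inr_inr {i j : Fin k} :
    (sunGraph k).Adj (.inr i) (.inr j) ↔ i ≠ j := by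
  simp [sunGraph, sunRel]

@[simp] theorem sunGraph_adj_inl_inr {i j : Fin k} :
    (sunGraph k).Adj (.inl i) (.inr j) ↔ j.val = i.val ∨ j.val = (i.val + 1) % k := by
  simp [sunGraph, sunRel]

@[simp] theorem sunGraph_not_adj_inl_inl {i j : Fin k} :
    ¬ (sunGraph k).Adj (.inl i) (.inl j) := by
  simp [sunGraph, sunRel]

theorem sunGraph_eq_of_trueTwins (hk : 3 ≤ k) {a b : Fin k ⊕ Fin k}
    (h : (sunGraph k).TrueTwins a b) : a = b := by
  by_contra hne
  have hadj := h.adj hne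
  have hmod : ∀ i : Fin k, (i.val + 1) % k ≠ i.val ∧ (i.val + 2) % k ≠ i.val ∧
      (i.val + 2) % k ≠ (i.val + 1) % k := by
    intro i
    have := i.isLt
    rcases Nat.mod_eq_self_or_sub (n := i.val + 1) (k := k) (by omega) with h1 | h1 <;>
    rcases Nat.mod_eq_self_or_sub (n := i.val + 2) (k := k) (by omega) with h2 | h2 <;> omega
  have mixed : ∀ i j : Fin k, (sunGraph k).TrueTwins (.inl i) (.inr j) → False := by
    intro i j hij
    have hj := sunGraph_adj_inl_inr.1 (hij.adj Sum.inl_ne_inr)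
    have := i.isLt
    let t : Fin k ⊕ Fin k := .inr ⟨(i.val + 2) % k, Nat.mod_lt _ (by omega)⟩
    -- `y_{i+2}` is adjacent to `y_j` but not to `x_i`
    have ht := (hij.adj_iff (t := t) Sum.inr_ne_inl (by grind)).2
    grind [sunGraph_adj_inl_inr, sunGraph_adj_inr_inr]
  rcases a with i | i <;> rcases b with j | j
  · simp at hadj
  · exact mixed i j h
  · exact mixed j i h.symm
  · -- `x_i` sees `y_i`, hence `y_j`, so `j = i + 1`; but then `x_j` sees `y_j` and not `y_i`
    have h1 := (h.adj_iff (t := .inl i) Sum.inl_ne_inr Sum.inl_ne_inr).1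
      (sunGraph_adj_inl_inr.2 (Or.inl rfl)).symm
    have h2 := (h.adj_iff (t := .inl j) Sum.inl_ne_inr Sum.inl_ne_inr).2
      (sunGraph_adj_inl_inr.2 (Or.inl rfl)).symm
    rw [adj_comm, sunGraph_adj_inl_inr] at h1 h2
    have := hmod i
    have := Nat.mod_add_mod (i.val + 1) k 1
    grind

end Sun

section TrueTwins

variable {U V W : Type*} {H : SimpleGraph U} {G : SimpleGraph V} {G' : SimpleGraph W}

theorem Chordal.comap (hG : Chordal G) (f : H ↪g G) : Chordal H := by
  intro v c hc hlen
  show c.HasChord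
  rw [← Walk.hasChord_map_iff f]
  exact hG _ (hc.map f.injective) (by rwa [Walk.length_map])

theorem Chordal.hasChord_of_support_subset_range (hG : Chordal G) (ψ : G ↪g G') {v : W}
    {c : G'.Walk v v} (hc : c.IsCycle) (hlen : 4 ≤ c.length)
    (hψ : ∀ x ∈ c.support, x ∈ Set.range ψ) : c.HasChord := by
  obtain ⟨f⟩ := nonempty_embedding_of_forall_mem_range ψ (Embedding.induce (Set.range ψ))
    Subtype.prop
  have hmap := c.map_induce hψ
  have hc₀ : (c.induce _ hψ).IsCycle := by
    apply Walk.IsCycle.of_map (f := (Embedding.induce _).toHom)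
    rwa [hmap]
  have hlen₀ : 4 ≤ (c.induce _ hψ).length := by
    rwa [← Walk.length_map (Embedding.induce _).toHom, hmap]
  rw [← hmap]
  exact (Walk.hasChord_map_iff _ _).2 (hG.comap f _ hc₀ hlen₀)

variable (ψ : G ↪g G') {z w : W} (htw : G'.TrueTwins z w) (hne : z ≠ w)
  (hψ : ∀ x, x ≠ z → x ∈ Set.range ψ)
include htw hne hψ

theorem Chordal.of_trueTwins (hG : Chordal G) : Chordal G' := by
  classical
  have avoid {v : W} (c : G'.Walk v v) (hc : c.IsCycle) (hlen : 4 ≤ c.length)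
      (hz : z ∉ c.support) : c.HasChord :=
    hG.hasChord_of_support_subset_range ψ hc hlen fun x hx => hψ x (ne_of_mem_of_not_mem hx hz)
  intro v c hc hlen
  show c.HasChord
  by_cases hz : z ∈ c.support
  · by_cases hw : w ∈ c.support
    · by_cases he : s(z, w) ∈ c.edges
      · exact hc.hasChord_of_trueTwins hlen htw he
      · exact ⟨z, w, hz, hw, htw.adj hne, he⟩
    · rw [← Walk.hasChord_map_iff htw.swapIso.toEmbedding]
      refine avoid _ (hc.map htw.swapIso.injective) (by simpa) ?_
      simpa [Walk.support_map, TrueTwins.swapIso, Equiv.swap_apply_eq_iff] using hw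
  · exact avoid c hc hlen hz

theorem isEmpty_embedding_of_trueTwins (hH : ∀ a b, H.TrueTwins a b → a = b)
    (hG : IsEmpty (H ↪g G)) : IsEmpty (H ↪g G') := by
  classical
  have avoid (φ : H ↪g G') (hz : z ∉ Set.range φ) : False :=
    hG.false (nonempty_embedding_of_forall_mem_range ψ φ
      fun x => hψ _ fun h => hz ⟨x, h⟩).some
  refine ⟨fun φ => ?_⟩
  by_cases hz : z ∈ Set.range φ
  · by_cases hw : w ∈ Set.range φ
    · obtain ⟨a, rfl⟩ := hz
      obtain ⟨b, rfl⟩ := hw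
      exact hne (congrArg φ (hH a b (htw.comap φ)))
    · refine avoid (htw.swapIso.toEmbedding.comp φ) ?_
      simpa [TrueTwins.swapIso, Equiv.swap_apply_eq_iff] using hw
  · exact avoid φ hz

theorem StronglyChordal.of_trueTwins (hG : StronglyChordal G) : StronglyChordal G' :=
  ⟨hG.1.of_trueTwins ψ htw hne hψ, fun k hk =>
    isEmpty_embedding_of_trueTwins ψ htw hne hψ (fun _ _ => sunGraph_eq_of_trueTwins hk)
      (hG.2 k hk)⟩

end TrueTwins

section AddTwin

variable {V : Type*} {G : SimpleGraph V} {u : V}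

theorem addTwin_adj_some {a b : V} : (addTwin G u).Adj (some a) (some b) ↔ G.Adj a b := by
  simp only [addTwin, fromRel_adj]
  grind [Adj.symm, Adj.ne]

variable (G u) in
def addTwinEmbedding : G ↪g addTwin G u where
  toFun := some
  inj' := Option.some_injective V
  map_rel_iff' := addTwin_adj_some

theorem addTwin_trueTwins : (addTwin G u).TrueTwins none (some u) := by
  ext (_ | a)
  · simp [addTwin]
  · simp only [addTwin, Set.mem_insert_iff, mem_neighborSet, fromRel_adj]
    grind [Adj.symm]

end AddTwin

/-- Adding a true twin of an existing vertex to a strongly chordal graph yields a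
strongly chordal graph. -/
theorem stmt2 {V : Type*} (G : SimpleGraph V) (u : V) (hG : StronglyChordal G) :
    StronglyChordal (addTwin G u) :=
  hG.of_trueTwins (addTwinEmbedding G u) addTwin_trueTwins (Option.some_ne_none u).symm
    fun _ hx => Option.ne_none_iff_exists.1 hx
end

section
/- If G is a Hamiltonian graph with at least 3 vertices and G' is obtained from G by adding a true twin of some vertex u of G, then G' is Hamiltonian. -/
/-!
Start a Hamiltonian cycle of `G` at `u`, say `u x … u`. Replacing its first edge `ux` by the
path `u v x` through the twin `v` of `u` visits `v` as well, so it is a Hamiltonian cycle of the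
new graph.
-/

open SimpleGraph

namespace SimpleGraph

theorem Walk.IsPath.isCycle_cons_concat {V : Type*} {G : SimpleGraph V} {x y w : V}
    {q : G.Walk x y} (hq : q.IsPath) (hxy : x ≠ y) (hw : w ∉ q.support)
    (hwx : G.Adj w x) (hyw : G.Adj y w) : (Walk.cons hwx (q.concat hyw)).IsCycle := by
  rw [Walk.isCycle_iff_isPath_tail_and_le_length]
  refine ⟨by simpa using hq.concat hw hyw, ?_⟩
  have := Walk.not_nil_iff_lt_length.mp (q.not_nil_of_ne hxy)
  simp only [Walk.length_cons, Walk.length_concat]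
  omega

theorem Walk.IsHamiltonianCycle.cons_concat_map {α β : Type*} [Fintype α] [Fintype β]
    [DecidableEq α] [DecidableEq β] {G : SimpleGraph α} {H : SimpleGraph β} {u x : α}
    {hux : G.Adj u x} {q : G.Walk x u} (hp : (Walk.cons hux q).IsHamiltonianCycle)
    (f : G ↪g H) (hcard : Fintype.card β = Fintype.card α + 1) {w : β} (hw : w ∉ Set.range f)
    (hwx : H.Adj w (f x)) (huw : H.Adj (f u) w) :
    (Walk.cons hwx ((q.map f.toHom).concat huw)).IsHamiltonianCycle := by
  have hq : q.IsPath := ((Walk.cons_isCycle_iff q hux).mp hp.isCycle).1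
  have hw' : w ∉ (q.map f.toHom).support := by
    simpa [Walk.support_map] using fun a _ h => hw ⟨a, h⟩
  refine Walk.isHamiltonianCycle_iff_isCycle_and_length_eq.mpr ⟨?_, ?_⟩
  · exact (hq.map f.injective).isCycle_cons_concat (f.injective.ne hux.ne') hw' hwx huw
  · have := hp.length_eq
    simp only [Walk.length_cons, Walk.length_concat, Walk.length_map] at this ⊢
    omega

variable {V : Type*} (G : SimpleGraph V) (u : V)

@[simp]
theorem addTwin_adj_some_some {a b : V} : (addTwin G u).Adj (some a) (some b) ↔ G.Adj a b := by
  simp only [addTwin, fromRel_adj, ne_eq, Option.some.injEq, G.adj_comm b a, or_self]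
  exact and_iff_right_of_imp Adj.ne

@[simp]
theorem addTwin_adj_none_some {a : V} : (addTwin G u).Adj none (some a) ↔ a = u ∨ G.Adj u a := by
  simp [addTwin]

@[simp]
theorem addTwin_adj_some_none {a : V} : (addTwin G u).Adj (some a) none ↔ a = u ∨ G.Adj u a := by
  rw [adj_comm, addTwin_adj_none_some]

@[simps!]
def embeddingAddTwin : G ↪g addTwin G u where
  toEmbedding := Function.Embedding.some
  map_rel_iff' := addTwin_adj_some_some G u

end SimpleGraph

/-- Adding a true twin of a vertex to a Hamiltonian graph with at least 3 vertices
yields a Hamiltonian graph. -/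
theorem stmt4 {V : Type*} [Fintype V] [DecidableEq V] (G : SimpleGraph V) (u : V)
    (hcard : 3 ≤ Fintype.card V) (hG : G.IsHamiltonian) :
    (addTwin G u).IsHamiltonian := by
  have : Nontrivial V := Fintype.one_lt_card_iff_nontrivial.mp (by omega)
  obtain ⟨p, hp⟩ := hG.exists_isHamiltonianCycle u
  cases p with
  | nil => exact absurd hp.isCycle Walk.not_isCycle_nil
  | cons hux q =>
    exact fun _ => ⟨none, _, hp.cons_concat_map (embeddingAddTwin G u) Fintype.card_option
      (by simp) (by simp [hux]) (by simp)⟩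
end

section
/- Let G be a connected chordal graph and S a clique of G such that G − S is disconnected. Then every connected component of G − S contains a simplicial vertex of G. -/
open SimpleGraph

/-!
In a chordal graph every connected vertex set `C` whose neighbourhood `N(C)`
is a clique contains a simplicial vertex; a component of `G − S` is such a set. If `C ∪ N(C)` is
a clique, every vertex of `C` is simplicial. Otherwise some vertex `b` has `N(C) ⊆ N[b]`, meets
`C` within `N[b]`, and misses some `a ∈ C`. The component `D` of `G[C] − N[b]` containing `a` is
strictly smaller than `C` and `N(D) ⊆ N(b)`, so `N(D)` is again a clique: two nonadjacent
vertices of `N(D)` are joined through `D` by a chordless path, which `b` would close into a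
chordless cycle of length at least four.
-/

namespace SimpleGraph

variable {V : Type*} {G : SimpleGraph V}

def closedNeighborSet (G : SimpleGraph V) (v : V) : Set V := insert v (G.neighborSet v)

@[simp]
theorem mem_closedNeighborSet {v w : V} : w ∈ G.closedNeighborSet v ↔ w = v ∨ G.Adj v w :=
  Iff.rfl

theorem mem_closedNeighborSet_comm {v w : V} :
    w ∈ G.closedNeighborSet v ↔ v ∈ G.closedNeighborSet w := by
  simp only [mem_closedNeighborSet, eq_comm, adj_comm]

theorem setNbhd_subset_of_isCompOf {A Q : Set V} (hQ : IsCompOf G A Q) : setNbhd G Q ⊆ A :=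
  fun t ⟨htQ, _, haQ, hat⟩ => by_contra fun htA => htQ (hQ.2.2 _ haQ t htA hat)

theorem connected_induce_singleton (v : V) : (G.induce {v}).Connected :=
  (connected_iff _).2 ⟨.of_subsingleton, ⟨⟨v, rfl⟩⟩⟩

theorem exists_isCompOf [Finite V] {A : Set V} {a : V} (ha : a ∉ A) :
    ∃ Q, a ∈ Q ∧ IsCompOf G A Q := by
  obtain ⟨Q, haQ, hmax⟩ := Finite.exists_le_maximal
    (p := fun Q : Set V => Disjoint Q A ∧ (G.induce Q).Connected)
    ⟨Set.disjoint_singleton_left.2 ha, connected_induce_singleton a⟩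
  refine ⟨Q, haQ rfl, hmax.prop.1, hmax.prop.2, fun x hx y hy hxy => hmax.mem_of_prop_insert ?_⟩
  refine ⟨Set.disjoint_insert_left.2 ⟨hy, hmax.prop.1⟩, ?_⟩
  rw [Set.insert_eq]
  exact connected_induce_union (connected_induce_singleton y).preconnected
    hmax.prop.2.preconnected rfl hx hxy.symm

theorem Reachable.exists_walk_of_induce {s : Set V} {u v : s} (h : (G.induce s).Reachable u v) :
    ∃ w : G.Walk u v, ∀ z ∈ w.support, z ∈ s := by
  obtain ⟨w⟩ := h
  refine ⟨w.map (Embedding.induce s).toHom, fun z hz => ?_⟩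
  have hz' := Walk.support_map (Embedding.induce s).toHom w ▸ hz
  simp only [List.mem_map] at hz'
  obtain ⟨z, -, rfl⟩ := hz'
  exact z.2

theorem isSimplicial_of_isClique_union_setNbhd {C : Set V} {v : V}
    (h : G.IsClique (C ∪ setNbhd G C)) (hv : v ∈ C) : IsSimplicial G v := by
  have hmem : ∀ {x}, G.Adj v x → x ∈ C ∪ setNbhd G C := fun {x} hvx =>
    or_iff_not_imp_left.2 fun hx => ⟨hx, v, hv, hvx⟩
  exact fun x y hvx hvy hxy => h (hmem hvx) (hmem hvy) hxy

theorem exists_closedNeighborSet_of_not_isClique {C : Set V} (hN : G.IsClique (setNbhd G C))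
    (h : ¬ G.IsClique (C ∪ setNbhd G C)) :
    ∃ b, setNbhd G C ⊆ G.closedNeighborSet b ∧ (C ∩ G.closedNeighborSet b).Nonempty ∧
      ¬ C ⊆ G.closedNeighborSet b := by
  contrapose! h
  have hNN : ∀ s ∈ setNbhd G C, setNbhd G C ⊆ G.closedNeighborSet s := fun s hs t ht =>
    (eq_or_ne t s).imp id fun hts => hN hs ht hts.symm
  have hNC : ∀ s ∈ setNbhd G C, C ⊆ G.closedNeighborSet s := fun s hs =>
    have ⟨_, c, hc, hcs⟩ := hs
    h s (hNN s hs) ⟨c, hc, Or.inr hcs.symm⟩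
  have hCC : ∀ c ∈ C, C ⊆ G.closedNeighborSet c := fun c hc =>
    h c (fun s hs => mem_closedNeighborSet_comm.1 (hNC s hs hc)) ⟨c, hc, Or.inl rfl⟩
  have hclosed : ∀ x ∈ C ∪ setNbhd G C, ∀ y ∈ C ∪ setNbhd G C, y ∈ G.closedNeighborSet x := by
    rintro x (hx | hx) y (hy | hy)
    · exact hCC x hx hy
    · exact mem_closedNeighborSet_comm.1 (hNC y hy hx)
    · exact hNC x hx hy
    · exact hNN x hx hy
  exact fun x hx y hy hxy => (hclosed x hx y hy).resolve_left hxy.symm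

end SimpleGraph

namespace SimpleGraph.Walk

variable {V : Type*} {G : SimpleGraph V}

theorem exists_length_lt_of_isChord :
    ∀ {u v : V} (p : G.Walk u v) {x y : V}, p.IsChord s(x, y) →
      ∃ q : G.Walk u v, q.length < p.length ∧ q.support ⊆ p.support
  | _, _, .nil, x, y, h => by
    obtain ⟨hxy, -, hx, hy⟩ := isChord_sym2Mk.1 h
    simp only [support_nil, List.mem_singleton] at hx hy
    exact absurd hxy (by simp [hx, hy])
  | u, _, .cons (v := w) huw p, x, y, h => by
    classical
    obtain ⟨hxy, hxyp, hx, hy⟩ := isChord_sym2Mk.1 h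
    simp only [edges_cons, List.mem_cons, not_or, support_cons] at hxyp hx hy
    have jump : ∀ z, G.Adj u z → z ∈ p.support → z ≠ w →
        ∃ q : G.Walk u _, q.length < (cons huw p).length ∧ q.support ⊆ (cons huw p).support :=
      fun z huz hz hzw => ⟨cons huz (p.dropUntil z hz),
        by simpa using length_dropUntil_lt_length hz hzw,
        List.cons_subset_cons _ (p.support_dropUntil_subset_support hz)⟩
    rcases hx with rfl | hx <;> rcases hy with rfl | hy
    · exact absurd hxy G.irrefl
    · exact jump y hxy hy (by rintro rfl; exact hxyp.1 rfl)
    · exact jump x hxy.symm hx (by rintro rfl; exact hxyp.1 Sym2.eq_swap)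
    · obtain ⟨q, hq, hqp⟩ := exists_length_lt_of_isChord p (isChord_sym2Mk.2 ⟨hxy, hxyp.2, hx, hy⟩)
      exact ⟨cons huw q, by simpa using hq, List.cons_subset_cons _ hqp⟩

theorem exists_isPath_isChordless {u v : V} (p : G.Walk u v) :
    ∃ q : G.Walk u v, q.IsPath ∧ q.IsChordless ∧ q.support ⊆ p.support := by
  classical
  obtain ⟨q, hqp, hmin⟩ := (measure fun q : G.Walk u v => q.length).wf.has_min
    {q | q.support ⊆ p.support} ⟨p, List.Subset.refl _⟩
  have hbp := List.Subset.trans q.support_bypass_subset_support hqp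
  refine ⟨q.bypass, q.bypass_isPath, fun e he => ?_, hbp⟩
  induction e using Sym2.ind with
  | _ x y =>
    obtain ⟨r, hr, hrq⟩ := exists_length_lt_of_isChord _ he
    exact hmin r (List.Subset.trans hrq hbp) (hr.trans_le q.length_bypass_le_length)

end SimpleGraph.Walk

namespace Chordal

variable {V : Type*} {G : SimpleGraph V}

theorem exists_adj_of_isChordless (hG : Chordal G) {u v b : V} {p : G.Walk u v}
    (hp : p.IsPath) (hpc : p.IsChordless) (huv : u ≠ v) (hnadj : ¬ G.Adj u v)
    (hb : b ∉ p.support) (hbu : G.Adj b u) (hbv : G.Adj b v) :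
    ∃ z ∈ p.support, z ≠ u ∧ z ≠ v ∧ G.Adj b z := by
  have hlen : 2 ≤ p.length := by
    by_contra! h
    interval_cases hl : p.length
    · exact huv (p.eq_of_length_eq_zero hl)
    · exact hnadj (p.adj_of_length_eq_one hl)
  have hbu_edges : s(b, u) ∉ (p.concat hbv.symm).edges := by
    simp only [Walk.edges_concat, List.concat_eq_append, List.mem_append, List.mem_singleton,
      not_or]
    refine ⟨fun h => hb (p.fst_mem_support_of_mem_edges h), ?_⟩
    simp only [Sym2.eq, Sym2.rel_iff', Prod.mk.injEq, Prod.swap_prod_mk, not_or, not_and]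
    exact ⟨fun hbv' => absurd hbv' hbv.ne, fun _ => huv⟩
  obtain ⟨x, y, hx, hy, hxy, hxyc⟩ := hG (Walk.cons hbu (p.concat hbv.symm))
    ((Walk.cons_isCycle_iff _ hbu).2 ⟨hp.concat hb hbv.symm, hbu_edges⟩) (by simp; omega)
  simp only [Walk.support_cons, Walk.support_concat, List.mem_cons, List.mem_append,
    List.not_mem_nil, or_false] at hx hy
  simp only [Walk.edges_cons, Walk.edges_concat, List.concat_eq_append, List.mem_cons,
    List.mem_append, List.not_mem_nil, or_false, not_or] at hxyc
  obtain ⟨hxu, hxyp, hxv⟩ := hxyc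
  have inner : ∀ z ∈ p.support, G.Adj b z → s(b, z) ≠ s(b, u) → s(b, z) ≠ s(v, b) →
      ∃ z ∈ p.support, z ≠ u ∧ z ≠ v ∧ G.Adj b z := fun z hz hbz hzu hzv =>
    ⟨z, hz, by rintro rfl; exact hzu rfl, by rintro rfl; exact hzv Sym2.eq_swap, hbz⟩
  replace hx : x = b ∨ x ∈ p.support := by tauto
  replace hy : y = b ∨ y ∈ p.support := by tauto
  rcases hx with rfl | hx
  · exact inner y (hy.resolve_left hxy.ne.symm) hxy hxu hxv
  rcases hy with rfl | hy
  · exact inner x hx hxy.symm (by rwa [Sym2.eq_swap]) (by rwa [Sym2.eq_swap])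
  · exact absurd (hpc.mem_edges hx hy hxy) hxyp

theorem isClique_setNbhd (hG : Chordal G) {D : Set V} {b : V} (hD : (G.induce D).Connected)
    (hDb : Disjoint D (G.closedNeighborSet b)) (hN : setNbhd G D ⊆ G.neighborSet b) :
    G.IsClique (setNbhd G D) := by
  intro t₁ ht₁ t₂ ht₂ hne
  by_contra hnadj
  obtain ⟨-, d₁, hd₁, hdt₁⟩ := id ht₁
  obtain ⟨-, d₂, hd₂, hdt₂⟩ := id ht₂
  obtain ⟨w, hwD⟩ := (hD.preconnected ⟨d₁, hd₁⟩ ⟨d₂, hd₂⟩).exists_walk_of_induce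
  obtain ⟨q, hq, hqc, hqp⟩ := (Walk.cons hdt₁.symm (w.concat hdt₂)).exists_isPath_isChordless
  have hqD : ∀ z ∈ q.support, z = t₁ ∨ z ∈ D ∨ z = t₂ := by
    intro z hz
    have hzp := hqp hz
    simp only [Walk.support_cons, Walk.support_concat, List.mem_cons, List.mem_append,
      List.not_mem_nil, or_false] at hzp
    exact hzp.imp_right (Or.imp_left (hwD z))
  have hb : b ∉ q.support := by
    intro hb
    rcases hqD b hb with rfl | hbD | rfl
    · exact G.irrefl (hN ht₁)
    · exact Set.disjoint_left.1 hDb hbD (Or.inl rfl)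
    · exact G.irrefl (hN ht₂)
  obtain ⟨z, hz, hz₁, hz₂, hbz⟩ :=
    hG.exists_adj_of_isChordless hq hqc hne hnadj hb (hN ht₁) (hN ht₂)
  exact Set.disjoint_left.1 hDb (((hqD z hz).resolve_left hz₁).resolve_right hz₂) (Or.inr hbz)

theorem exists_isSimplicial [Finite V] (hG : Chordal G) {C : Set V}
    (hC : (G.induce C).Connected) (hN : G.IsClique (setNbhd G C)) :
    ∃ v ∈ C, IsSimplicial G v := by
  induction hn : C.ncard using Nat.strong_induction_on generalizing C with
  | _ n ih =>
  by_cases hCN : G.IsClique (C ∪ setNbhd G C)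
  · obtain ⟨v, hv⟩ := hC.nonempty
    exact ⟨v, hv, isSimplicial_of_isClique_union_setNbhd hCN hv⟩
  obtain ⟨b, hNb, ⟨c, hcC, hcb⟩, hCb⟩ := exists_closedNeighborSet_of_not_isClique hN hCN
  obtain ⟨a, haC, hab⟩ := Set.not_subset.1 hCb
  obtain ⟨D, -, hD⟩ :=
    exists_isCompOf (G := G) (show a ∉ Cᶜ ∪ G.closedNeighborSet b by simp [haC, hab])
  have hDC : D ⊆ C := fun d hd => by_contra fun hdC => Set.disjoint_left.1 hD.1 hd (Or.inl hdC)
  have hDb : Disjoint D (G.closedNeighborSet b) :=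
    hD.1.mono_right Set.subset_union_right
  have hND : setNbhd G D ⊆ G.neighborSet b := by
    intro t ht
    obtain ⟨-, d, hd, hdt⟩ := id ht
    have htb : t ∈ G.closedNeighborSet b :=
      (setNbhd_subset_of_isCompOf hD ht).elim (fun htC => hNb ⟨htC, d, hDC hd, hdt⟩) id
    exact htb.resolve_left
      (by rintro rfl; exact Set.disjoint_left.1 hDb hd (Or.inr hdt.symm))
  have hDn : D.ncard < n := hn ▸
    Set.ncard_lt_ncard ⟨hDC, fun hCD => Set.disjoint_left.1 hDb (hCD hcC) hcb⟩ C.toFinite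
  obtain ⟨v, hvD, hv⟩ := ih _ hDn hD.2.1 (hG.isClique_setNbhd hD.2.1 hDb hND) rfl
  exact ⟨v, hDC hvD, hv⟩

end Chordal

theorem stmt8_general {V : Type*} [Fintype V] (G : SimpleGraph V)
    (hch : Chordal G) (S : Set V) (hS : G.IsClique S) :
    ∀ Q : Set V, IsCompOf G S Q → ∃ v ∈ Q, IsSimplicial G v :=
  fun _ hQ => hch.exists_isSimplicial hQ.2.1 (hS.subset (setNbhd_subset_of_isCompOf hQ))

/-- If `G` is a connected chordal graph and `S` a clique such that `G − S` is
disconnected, then every connected component of `G − S` contains a simplicial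
vertex of `G`. -/
theorem stmt8 {V : Type*} [Fintype V] (G : SimpleGraph V)
    (hch : Chordal G) (hconn : G.Connected) (S : Set V) (hS : G.IsClique S)
    (hdisc : ¬ (G.induce (Sᶜ : Set V)).Connected) :
    ∀ Q : Set V, IsCompOf G S Q → ∃ v ∈ Q, IsSimplicial G v :=
  stmt8_general G hch S hS
end

section
/- Let G be a Hamiltonian chordal graph, C a cycle of G that is not extendable, Q a connected component of G − V(C), and S = N(Q) the set of vertices outside Q with a neighbor in Q. If two vertices x, y ∈ S are adjacent in G and have no common neighbor in Q, then G contains an induced cycle of length at least 4 (contradiction); hence any two adjacent vertices of S have a common neighbor in Q. -/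
open SimpleGraph

/-! Choose a shortest walk `P` inside `Q` from a neighbour `a` of `x`
to a neighbour `b` of `y`. If `a ≠ b`, then `x, P, y` closes up to a cycle of length at least 4,
and every chord of it produces a strictly shorter walk of the same kind: a chord inside `P`
shortcuts `P`, and a chord from `x` (resp. `y`) into `P` moves the start (resp. end) of `P`. -/

namespace SimpleGraph.Walk

variable {V : Type*} {G : SimpleGraph V}

lemma exists_shorter_of_adj_of_notMem_edges {a b u v : V} (p : G.Walk a b)
    (hu : u ∈ p.support) (hv : v ∈ p.support) (huv : G.Adj u v) (he : s(u, v) ∉ p.edges) :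
    ∃ q : G.Walk a b, q.support ⊆ p.support ∧ q.length < p.length := by
  classical
  induction p with
  | nil => simp_all
  | @cons a c b h p ih =>
    have shortcut : ∀ {w}, w ∈ p.support → G.Adj a w → w ≠ c →
        ∃ q : G.Walk a b, q.support ⊆ (cons h p).support ∧ q.length < (cons h p).length :=
      fun hw haw hwc => ⟨cons haw (p.dropUntil _ hw),
        List.cons_subset_cons _ (p.support_dropUntil_subset_support hw),
        by simpa using length_dropUntil_lt_length hw hwc⟩
    rw [support_cons, List.mem_cons] at hu hv
    rw [edges_cons, List.mem_cons, not_or] at he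
    rcases hu with rfl | hu <;> rcases hv with rfl | hv
    · exact absurd rfl huv.ne
    · exact shortcut hv huv (by rintro rfl; exact he.1 rfl)
    · exact shortcut hu huv.symm (by rintro rfl; exact he.1 Sym2.eq_swap)
    · obtain ⟨q, hqs, hql⟩ := ih hu hv he.2
      exact ⟨cons h q, List.cons_subset_cons _ hqs, by simpa using hql⟩

variable {a b x y : V} {P : G.Walk a b} (hxa : G.Adj x a) (hby : G.Adj b y) (hyx : G.Adj y x)

lemma isCycle_cons_concat_concat (hP : P.IsPath) (hx : x ∉ P.support) (hy : y ∉ P.support) :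
    (cons hxa ((P.concat hby).concat hyx)).IsCycle := by
  refine (cons_isCycle_iff _ hxa).2 ⟨(hP.concat hy hby).concat ?_ hyx, ?_⟩
  · simpa [hyx.ne.symm] using hx
  · intro h
    simp only [edges_concat, List.concat_eq_append, List.mem_append, List.mem_singleton,
      Sym2.eq_iff] at h
    obtain (h | ⟨rfl, rfl⟩ | ⟨rfl, -⟩) | ⟨rfl, -⟩ | ⟨-, rfl⟩ := h
    · exact hx (P.fst_mem_support_of_mem_edges h)
    · exact hx P.end_mem_support
    · exact hyx.ne rfl
    · exact hyx.ne rfl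
    · exact hy P.start_mem_support

lemma exists_shorter_of_chord_cons_concat_concat {u w : V}
    (hu : u ∈ (cons hxa ((P.concat hby).concat hyx)).support)
    (hw : w ∈ (cons hxa ((P.concat hby).concat hyx)).support) (huw : G.Adj u w)
    (he : s(u, w) ∉ (cons hxa ((P.concat hby).concat hyx)).edges) :
    ∃ (a' b' : V) (q : G.Walk a' b'), q.support ⊆ P.support ∧ q.length < P.length ∧
      G.Adj x a' ∧ G.Adj y b' := by
  classical
  have mem : ∀ z ∈ (cons hxa ((P.concat hby).concat hyx)).support,
      z = x ∨ z = y ∨ z ∈ P.support := by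
    simp only [support_cons, support_concat, List.mem_cons, List.mem_append, List.not_mem_nil,
      or_false]
    tauto
  simp only [edges_cons, edges_concat, List.concat_eq_append, List.mem_cons, List.mem_append,
    List.not_mem_nil, or_false, not_or] at he
  obtain ⟨hne_xa, ⟨hne_P, hne_by⟩, hne_yx⟩ := he
  have chord_x : ∀ {q}, q ∈ P.support → G.Adj x q → s(x, q) ≠ s(x, a) →
      ∃ (a' b' : V) (q : G.Walk a' b'), q.support ⊆ P.support ∧ q.length < P.length ∧
        G.Adj x a' ∧ G.Adj y b' := fun hq hxq hne =>
    ⟨_, b, P.dropUntil _ hq, P.support_dropUntil_subset_support hq,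
      length_dropUntil_lt_length hq (by rintro rfl; exact hne rfl), hxq, hby.symm⟩
  have chord_y : ∀ {q}, q ∈ P.support → G.Adj y q → s(q, y) ≠ s(b, y) →
      ∃ (a' b' : V) (q : G.Walk a' b'), q.support ⊆ P.support ∧ q.length < P.length ∧
        G.Adj x a' ∧ G.Adj y b' := fun hq hyq hne =>
    ⟨a, _, P.takeUntil _ hq, P.support_takeUntil_subset_support hq,
      length_takeUntil_lt_length hq (by rintro rfl; exact hne rfl), hxa, hyq⟩
  rcases mem u hu with rfl | rfl | huP <;> rcases mem w hw with rfl | rfl | hwP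
  · exact absurd rfl huw.ne
  · exact absurd Sym2.eq_swap hne_yx
  · exact chord_x hwP huw hne_xa
  · exact absurd rfl hne_yx
  · exact absurd rfl huw.ne
  · exact chord_y hwP huw (by rwa [Sym2.eq_swap])
  · exact chord_x huP huw.symm (by rwa [Sym2.eq_swap])
  · exact chord_y huP huw.symm hne_by
  · obtain ⟨q, hqs, hql⟩ := P.exists_shorter_of_adj_of_notMem_edges huP hwP huw hne_P
    exact ⟨a, b, q, hqs, hql, hxa, hby.symm⟩

end SimpleGraph.Walk

section

variable {V : Type*} {G : SimpleGraph V}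

theorem Chordal.exists_common_adj_of_walk (hch : Chordal G) {Q : Set V} {x y : V}
    (hxy : G.Adj x y) (hxQ : x ∉ Q) (hyQ : y ∉ Q) {a b : V} (p : G.Walk a b)
    (hpQ : ∀ z ∈ p.support, z ∈ Q) (hxa : G.Adj x a) (hyb : G.Adj y b) :
    ∃ w ∈ Q, G.Adj x w ∧ G.Adj y w := by
  classical
  induction hn : p.length using Nat.strong_induction_on generalizing a b p with
  | _ n ih =>
  by_cases hab : a = b
  · subst hab
    exact ⟨a, hpQ a p.start_mem_support, hxa, hyb⟩
  have hPQ : ∀ z ∈ p.bypass.support, z ∈ Q := fun z hz =>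
    hpQ z (p.support_bypass_subset_support hz)
  have hC := Walk.isCycle_cons_concat_concat hxa hyb.symm hxy.symm
    p.bypass_isPath (fun h => hxQ (hPQ x h)) (fun h => hyQ (hPQ y h))
  have hlen : 1 ≤ p.bypass.length :=
    Nat.one_le_iff_ne_zero.2 fun h => hab (Walk.eq_of_length_eq_zero h)
  obtain ⟨u, w, hu, hw, huw, he⟩ :=
    hch _ hC (by simp only [Walk.length_cons, Walk.length_concat]; omega)
  obtain ⟨a', b', q, hqs, hql, hxa', hyb'⟩ :=
    Walk.exists_shorter_of_chord_cons_concat_concat hxa hyb.symm hxy.symm hu hw huw he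
  exact ih _ (hn ▸ hql.trans_le p.length_bypass_le_length) q (fun z hz => hPQ z (hqs hz))
    hxa' hyb' rfl

theorem Chordal.exists_common_adj_of_preconnected (hch : Chordal G) {Q : Set V}
    (hQ : (G.induce Q).Preconnected) {x y : V} (hx : x ∈ setNbhd G Q) (hy : y ∈ setNbhd G Q)
    (hxy : G.Adj x y) : ∃ w ∈ Q, G.Adj x w ∧ G.Adj y w := by
  obtain ⟨hxQ, a, haQ, hax⟩ := hx
  obtain ⟨hyQ, b, hbQ, hby⟩ := hy
  obtain ⟨p⟩ := hQ ⟨a, haQ⟩ ⟨b, hbQ⟩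
  refine hch.exists_common_adj_of_walk hxy hxQ hyQ (p.map (Embedding.induce Q).toHom) ?_
    hax.symm hby.symm
  simp only [Walk.support_map, List.mem_map]
  rintro _ ⟨z, -, rfl⟩
  exact z.2

end

theorem stmt11_general {V : Type*} (G : SimpleGraph V)
    (hch : Chordal G)
    {v : V} (c : G.Walk v v)
    (Q : Set V) (hQ : IsCompOf G {x | x ∈ c.support} Q)
    (x y : V) (hx : x ∈ setNbhd G Q) (hy : y ∈ setNbhd G Q) (hxy : G.Adj x y) :
    ∃ w ∈ Q, G.Adj x w ∧ G.Adj y w :=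
  hch.exists_common_adj_of_preconnected hQ.2.1.preconnected hx hy hxy

/-- In a Hamiltonian chordal graph, if `C` is a nonextendable cycle, `Q` a connected
component of `G − V(C)` and `S = N(Q)`, then any two adjacent vertices of `S` have a
common neighbor in `Q`. -/
theorem stmt11 {V : Type*} [Fintype V] [DecidableEq V] (G : SimpleGraph V)
    (hH : G.IsHamiltonian) (hch : Chordal G)
    {v : V} (c : G.Walk v v) (hc : c.IsCycle) (hne : ¬ CycleExtendable G c)
    (Q : Set V) (hQ : IsCompOf G {x | x ∈ c.support} Q)
    (x y : V) (hx : x ∈ setNbhd G Q) (hy : y ∈ setNbhd G Q) (hxy : G.Adj x y) :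
    ∃ w ∈ Q, G.Adj x w ∧ G.Adj y w :=
  stmt11_general G hch c Q hQ x y hx hy hxy
end

section
/- Let G be a chordal graph, C a nonextendable cycle of G, Q a connected component of G − V(C), and S = N(Q). Then no two vertices of S are consecutive on C; that is, no edge of C joins two vertices of S. -/
open SimpleGraph

/-! Suppose the edge `xy` of `C` has both ends in `N(Q)`, and take a shortest `x`–`y` path `P`
with inner vertices in `Q`, other than the edge `xy`. If `P` has length `2`, its middle vertex
lies in `Q`, hence off `C`, and replacing `xy` by the two edges of `P` extends `C`. If `P` were
longer, `P + xy` would be a cycle of length at least `4`; a chord given by chordality joins two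
vertices of `P` and is not `xy`, so it shortens `P`. -/

section

variable {V : Type*} {G : SimpleGraph V} {u v x y w : V}

lemma cycleExtendable_congr {c : G.Walk u u} {d : G.Walk v v}
    (h : ∀ z, z ∈ c.support ↔ z ∈ d.support) : CycleExtendable G c ↔ CycleExtendable G d := by
  simp only [CycleExtendable, h]

namespace SimpleGraph.Walk

lemma mk_mem_edges_of_length_eq_one {p : G.Walk u v} (hp : p.length = 1) :
    s(u, v) ∈ p.edges := by
  simpa [penultimate, hp] using
    p.mk_penultimate_end_mem_edges (by simp [← length_eq_zero_iff, hp])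

/-- Between two adjacent vertices of a shortest walk, the subwalk is itself shortest,
hence a single edge. -/
lemma isChordless_of_length_eq_dist {p : G.Walk u v} (hp : p.length = G.dist u v) :
    p.IsChordless := by
  classical
  refine isChordless_iff_forall_mem_edges.mpr fun a b ha hb hab => ?_
  have hb' : b ∈ (p.takeUntil a ha).support ∨ b ∈ (p.dropUntil a ha).support := by
    rw [← mem_support_append_iff, p.take_spec ha]
    exact hb
  rcases hb' with hb' | hb'
  · have hq := (isSubwalk_dropUntil _ hb').trans (p.isSubwalk_takeUntil ha)
    have hlen := (length_eq_dist_of_subwalk hp hq).trans (dist_eq_one_iff_adj.mpr hab.symm)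
    exact Sym2.eq_swap ▸ hq.edges_subset (mk_mem_edges_of_length_eq_one hlen)
  · have hq := (isSubwalk_takeUntil _ hb').trans (p.isSubwalk_dropUntil ha)
    have hlen := (length_eq_dist_of_subwalk hp hq).trans (dist_eq_one_iff_adj.mpr hab)
    exact hq.edges_subset (mk_mem_edges_of_length_eq_one hlen)

lemma IsCycle.eq_snd_or_eq_penultimate {c : G.Walk x x} (hc : c.IsCycle)
    (he : s(x, y) ∈ c.edges) : y = c.snd ∨ y = c.penultimate := by
  rw [← c.cons_tail_eq hc.not_nil, edges_cons, List.mem_cons] at he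
  rcases he with he | he
  · exact Or.inl (Sym2.congr_right.mp he)
  · refine Or.inr ((hc.isPath_tail.eq_penultimate_of_mem_edges he).trans ?_)
    rw [penultimate, getVert_tail, length_tail, penultimate]
    have := hc.three_le_length
    congr 1
    omega

lemma IsCycle.cycleExtendable_of_adj_snd {c : G.Walk x x} (hc : c.IsCycle)
    (hw : w ∉ c.support) (hxw : G.Adj x w) (hwy : G.Adj w c.snd) : CycleExtendable G c := by
  have htail : c.tail.support = c.support.tail := c.support_tail_of_not_nil hc.not_nil
  have hwt : w ∉ c.tail.support := fun h => hw (List.mem_of_mem_tail (htail ▸ h))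
  refine ⟨w, x, .cons hxw (.cons hwy c.tail), ?_, hw, fun z => ?_⟩
  · refine (cons_isCycle_iff _ _).mpr ⟨hc.isPath_tail.cons hwt, ?_⟩
    rw [edges_cons, List.mem_cons, not_or]
    refine ⟨fun h => (c.adj_snd hc.not_nil).ne ?_,
      fun h => hwt (c.tail.snd_mem_support_of_mem_edges h)⟩
    grind [hxw.ne]
  · rw [← c.cons_tail_support, support_cons, support_cons, htail]
    grind

lemma IsCycle.cycleExtendable_of_adj_of_adj {c : G.Walk u u} (hc : c.IsCycle)
    (he : s(x, y) ∈ c.edges) (hw : w ∉ c.support) (hxw : G.Adj x w) (hwy : G.Adj w y) :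
    CycleExtendable G c := by
  classical
  have hx := c.fst_mem_support_of_mem_edges he
  rw [cycleExtendable_congr fun z => (c.mem_support_rotate_iff x hx).symm]
  have hd := hc.rotate hx
  have hwd : w ∉ (c.rotate x hx).support := by simpa using hw
  rcases hd.eq_snd_or_eq_penultimate ((c.rotate_edges x hx).perm.mem_iff.mpr he) with rfl | rfl
  · exact hd.cycleExtendable_of_adj_snd hwd hxw hwy
  · rw [cycleExtendable_congr fun z => by rw [support_reverse, List.mem_reverse]]
    exact hd.reverse.cycleExtendable_of_adj_snd (by simpa using hwd) hxw
      (snd_reverse _ ▸ hwy)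

end SimpleGraph.Walk

lemma Chordal.exists_isChord_ne {p : G.Walk x y} (hG : Chordal G) (hp : p.IsPath)
    (hxy : G.Adj x y) (hxyp : s(x, y) ∉ p.edges) (hlen : 3 ≤ p.length) :
    ∃ e, p.IsChord e ∧ e ≠ s(x, y) := by
  obtain ⟨a, b, ha, hb, hab, habc⟩ := hG _
    ((Walk.cons_isCycle_iff p hxy.symm).mpr ⟨hp, Sym2.eq_swap ▸ hxyp⟩) (by simpa using hlen)
  rw [Walk.edges_cons, List.mem_cons, not_or, Sym2.eq_swap (a := y)] at habc
  simp only [Walk.support_cons, List.mem_cons] at ha hb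
  have hy := p.end_mem_support
  exact ⟨s(a, b), ⟨hab, habc.2, ha.elim (· ▸ hy) id, hb.elim (· ▸ hy) id⟩, habc.1⟩

/-- Its `x`–`y` paths are the `x`–`y` paths of `G` with all inner vertices in `Q`, except the
edge `xy` itself. -/
def detourGraph (G : SimpleGraph V) (Q : Set V) (x y : V) : SimpleGraph V :=
  ((⊤ : G.Subgraph).induce (insert x (insert y Q))).spanningCoe.deleteEdges {s(x, y)}

variable {Q : Set V}

@[simp]
lemma detourGraph_adj {a b : V} :
    (detourGraph G Q x y).Adj a b ↔ G.Adj a b ∧ a ∈ insert x (insert y Q) ∧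
      b ∈ insert x (insert y Q) ∧ s(a, b) ≠ s(x, y) := by
  simp only [detourGraph, deleteEdges_adj, Subgraph.spanningCoe_adj, Subgraph.induce_adj,
    Subgraph.top_adj, Set.mem_singleton_iff]
  tauto

lemma detourGraph_le : detourGraph G Q x y ≤ G := fun _ _ h => (detourGraph_adj.mp h).1

lemma mem_of_mem_support_detourGraph {z : V} {p : (detourGraph G Q x y).Walk u v}
    (hu : u ∈ insert x (insert y Q)) (hz : z ∈ p.support) : z ∈ insert x (insert y Q) := by
  induction p with
  | nil => simp_all
  | cons h p ih =>
    rw [Walk.support_cons, List.mem_cons] at hz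
    rcases hz with rfl | hz
    exacts [hu, ih (detourGraph_adj.mp h).2.2.1 hz]

lemma detourGraph_reachable (hQ : (G.induce Q).Preconnected) (hx : x ∈ setNbhd G Q)
    (hy : y ∈ setNbhd G Q) : (detourGraph G Q x y).Reachable x y := by
  obtain ⟨hxQ, a, ha, hax⟩ := hx
  obtain ⟨hyQ, b, hb, hby⟩ := hy
  have hne : ∀ c ∈ Q, ∀ d, s(c, d) ≠ s(x, y) := by
    rintro c hc d h
    rcases Sym2.eq_iff.mp h with ⟨rfl, -⟩ | ⟨rfl, -⟩
    exacts [hxQ hc, hyQ hc]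
  let f : G.induce Q →g detourGraph G Q x y :=
    { toFun := Subtype.val
      map_rel' := fun {c d} h =>
        detourGraph_adj.mpr ⟨h, by simp [c.2], by simp [d.2], hne _ c.2 _⟩ }
  have hxa : (detourGraph G Q x y).Adj x a :=
    detourGraph_adj.mpr ⟨hax.symm, by simp, by simp [ha], Sym2.eq_swap (a := x) ▸ hne a ha x⟩
  have hby' : (detourGraph G Q x y).Adj b y :=
    detourGraph_adj.mpr ⟨hby, by simp [hb], by simp, hne b hb y⟩
  exact hxa.reachable.trans (((hQ ⟨a, ha⟩ ⟨b, hb⟩).map f).trans hby'.reachable)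

lemma Chordal.dist_detourGraph_le_two (hG : Chordal G) (hxy : G.Adj x y) :
    (detourGraph G Q x y).dist x y ≤ 2 := by
  classical
  by_contra! hlt
  obtain ⟨p, hp, hlen⟩ :=
    (Reachable.of_dist_ne_zero (u := x) (v := y) (G := detourGraph G Q x y)
      (by omega)).exists_path_of_dist
  have hxyp : s(x, y) ∉ p.edges := fun h => (detourGraph_adj.mp (p.adj_of_mem_edges h)).2.2.2 rfl
  obtain ⟨e, hchord, hne⟩ := hG.exists_isChord_ne (hp.mapLe detourGraph_le) hxy
    (by rwa [Walk.edges_mapLe_eq_edges]) (by rw [Walk.length_mapLe]; omega)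
  induction e using Sym2.ind with | h a b => ?_
  simp only [Walk.isChord_sym2Mk, Walk.support_mapLe_eq_support, Walk.edges_mapLe_eq_edges]
    at hchord
  obtain ⟨hab, habp, ha, hb⟩ := hchord
  have hx : x ∈ insert x (insert y Q) := Set.mem_insert x _
  exact p.isChordless_of_length_eq_dist hlen (e := s(a, b))
    ⟨detourGraph_adj.mpr ⟨hab, mem_of_mem_support_detourGraph hx ha,
      mem_of_mem_support_detourGraph hx hb, hne⟩, habp, ha, hb⟩

end

/-- If `C` is a nonextendable cycle of a chordal graph `G`, `Q` a connected component
of `G − V(C)` and `S = N(Q)`, then no edge of `C` joins two vertices of `S`. -/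
theorem stmt12 {V : Type*} (G : SimpleGraph V) (hch : Chordal G)
    {v : V} (c : G.Walk v v) (hc : c.IsCycle) (hne : ¬ CycleExtendable G c)
    (Q : Set V) (hQ : IsCompOf G {x | x ∈ c.support} Q)
    (x y : V) (hx : x ∈ setNbhd G Q) (hy : y ∈ setNbhd G Q) :
    s(x, y) ∉ c.edges := by
  intro he
  have hxy := c.adj_of_mem_edges he
  have hreach := detourGraph_reachable hQ.2.1.preconnected hx hy
  have hdist : (detourGraph G Q x y).dist x y = 2 :=
    le_antisymm (hch.dist_detourGraph_le_two hxy)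
      (hreach.one_lt_dist_of_ne_of_not_adj hxy.ne fun h => (detourGraph_adj.mp h).2.2.2 rfl)
  obtain ⟨-, -, m, hm⟩ := edist_eq_two_iff.mp (by rw [← hreach.coe_dist_eq_edist, hdist]; rfl)
  obtain ⟨hxm, hmy⟩ :=
    ((mem_commonNeighbors _).mp hm).imp detourGraph_adj.mp detourGraph_adj.mp
  have hmQ : m ∈ Q := by simpa [hxm.1.ne', hmy.1.ne'] using hxm.2.2.1
  exact hne (hc.cycleExtendable_of_adj_of_adj he (Set.disjoint_left.mp hQ.1 hmQ) hxm.1 hmy.1.symm)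
end

section
/- In the 15-vertex graph Ĥ (path a–b–c–d–e–f–g, universal vertices u₁,u₂,u₃, and degree-2 vertices v₁,…,v₅ with edges v₁a, v₁u₂, v₂u₂, v₂g, v₃b, v₃u₃, v₄u₃, v₄f, v₅e, v₅u₁), the cycle C = a v₁ u₂ v₂ g u₁ v₅ e f v₄ u₃ v₃ b a is not extendable: there is no cycle C' in Ĥ with V(C') = V(C) ∪ {w} for w ∈ {c, d}. -/
open SimpleGraph

/-- The edges of the graph `Ĥ`: vertices `a,…,g` of the path are `0,…,6`, the
universal vertices `u₁,u₂,u₃` are `7,8,9`, and the vertices `v₁,…,v₅` are `10,…,14`. -/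
def hhatEdges : List (ℕ × ℕ) :=
  [(0, 1), (1, 2), (2, 3), (3, 4), (4, 5), (5, 6),
   (7, 0), (7, 1), (7, 2), (7, 3), (7, 4), (7, 5), (7, 6),
   (8, 0), (8, 1), (8, 2), (8, 3), (8, 4), (8, 5), (8, 6),
   (9, 0), (9, 1), (9, 2), (9, 3), (9, 4), (9, 5), (9, 6),
   (7, 8), (7, 9), (8, 9),
   (10, 0), (10, 8), (11, 8), (11, 6), (12, 1), (12, 9), (13, 9), (13, 5),
   (14, 4), (14, 7)]

/-- The graph `Ĥ`: a path `a b c d e f g`, three universal vertices `u₁, u₂, u₃`,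
and five degree-2 vertices `v₁,…,v₅` with the heavy edges
`v₁a, v₁u₂, v₂u₂, v₂g, v₃b, v₃u₃, v₄u₃, v₄f, v₅e, v₅u₁`. -/
def Hhat : SimpleGraph (Fin 15) :=
  SimpleGraph.fromRel (fun i j => (i.val, j.val) ∈ hhatEdges)

instance : DecidableRel Hhat.Adj := fun a b =>
  inferInstanceAs (Decidable (a ≠ b ∧
    ((a.val, b.val) ∈ hhatEdges ∨ (b.val, a.val) ∈ hhatEdges)))
/-- The cycle `C = a v₁ u₂ v₂ g u₁ v₅ e f v₄ u₃ v₃ b a` in `Ĥ`,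
i.e. `0 10 8 11 6 7 14 4 5 13 9 12 1 0`. -/
def Cwalk : Hhat.Walk 0 0 :=
  .cons (show Hhat.Adj 0 10 by decide) (.cons (show Hhat.Adj 10 8 by decide)
    (.cons (show Hhat.Adj 8 11 by decide) (.cons (show Hhat.Adj 11 6 by decide)
    (.cons (show Hhat.Adj 6 7 by decide) (.cons (show Hhat.Adj 7 14 by decide)
    (.cons (show Hhat.Adj 14 4 by decide) (.cons (show Hhat.Adj 4 5 by decide)
    (.cons (show Hhat.Adj 5 13 by decide) (.cons (show Hhat.Adj 13 9 by decide)
    (.cons (show Hhat.Adj 9 12 by decide) (.cons (show Hhat.Adj 12 1 by decide)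
    (.cons (show Hhat.Adj 1 0 by decide) .nil))))))))))))

/-! The degree-two vertices `v₁,…,v₅` force their edges onto any spanning cycle, which saturates
`u₂` (by `v₁, v₂`) and `u₃` (by `v₃, v₄`). In `Ĥ − d` this leaves `c` only the neighbours `b, u₁`;
then `b` is saturated by `v₃, c`, so `a` must use `u₁` as well, and `u₁` ends up with the three
neighbours `v₅, c, a`. In `Ĥ − c` it leaves `d` only `e, u₁`, and together with `v₅` these close
the cycle `d e v₅ u₁` before reaching `a`. -/

namespace SimpleGraph

variable {V : Type*} {G : SimpleGraph V}

def Subgraph.IsTwoRegular (H : G.Subgraph) : Prop :=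
  ∀ ⦃v⦄, v ∈ H.verts → (H.neighborSet v).ncard = 2

lemma Walk.IsCycle.isTwoRegular_toSubgraph {u : V} {c : G.Walk u u} (hc : c.IsCycle) :
    c.toSubgraph.IsTwoRegular := fun _ hv =>
  hc.ncard_neighborSet_toSubgraph_eq_two (c.mem_verts_toSubgraph.1 hv)

namespace Subgraph

variable {H : G.Subgraph} {x y p q : V}

lemma IsTwoRegular.neighborSet_eq_pair_of_forall_adj (hH : H.IsTwoRegular) (hx : x ∈ H.verts)
    (hpq : p ≠ q) (h : ∀ z, H.Adj x z → z = p ∨ z = q) : H.neighborSet x = {p, q} :=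
  Set.eq_of_subset_of_ncard_le h (by rw [Set.ncard_pair hpq, hH hx]) (Set.toFinite _)

lemma IsTwoRegular.neighborSet_eq_pair_of_adj (hH : H.IsTwoRegular) (hpq : p ≠ q)
    (hp : H.Adj x p) (hq : H.Adj x q) : H.neighborSet x = {p, q} := by
  have hx : (H.neighborSet x).ncard = 2 := hH hp.fst_mem
  have hsub : {p, q} ⊆ H.neighborSet x := Set.pair_subset hp hq
  refine (Set.eq_of_subset_of_ncard_le hsub ?_
    (Set.finite_of_ncard_ne_zero (by rw [hx]; simp))).symm
  rw [hx, Set.ncard_pair hpq]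

lemma IsTwoRegular.adj_of_ncard_neighborSet_le_two [Finite V] (hH : H.IsTwoRegular)
    (hx : x ∈ H.verts) (hG : (G.neighborSet x).ncard ≤ 2) (h : G.Adj x y) : H.Adj x y := by
  have hN : H.neighborSet x = G.neighborSet x :=
    Set.eq_of_subset_of_ncard_le (H.neighborSet_subset x) (hG.trans (hH hx).ge) (Set.toFinite _)
  have hy : y ∈ G.neighborSet x := h
  rwa [← hN] at hy

lemma adj_of_neighborSet_eq_pair (hx : H.neighborSet x = {p, q}) : H.Adj x p ∧ H.Adj x q := by
  have hp : p ∈ H.neighborSet x := hx ▸ Set.mem_insert p {q}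
  have hq : q ∈ H.neighborSet x := hx ▸ Set.mem_insert_of_mem p rfl
  exact ⟨hp, hq⟩

lemma Adj.ne_of_neighborSet_eq_pair {z : V} (h : H.Adj x z) (hy : H.neighborSet y = {p, q})
    (hp : x ≠ p) (hq : x ≠ q) : z ≠ y := by
  rintro rfl
  have hx : x ∈ H.neighborSet z := h.symm
  rw [hy] at hx
  exact hx.elim hp hq

lemma Connected.verts_subset_of_adj_closed {A : Set V} (hH : H.Connected)
    (hA : ∀ ⦃a b⦄, a ∈ A → H.Adj a b → b ∈ A) (hx : x ∈ H.verts) (hxA : x ∈ A) :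
    H.verts ⊆ A := by
  suffices ∀ y : H.verts, Relation.ReflTransGen H.coe.Adj ⟨x, hx⟩ y → y.1 ∈ A from
    fun y hy => this ⟨y, hy⟩ ((reachable_iff_reflTransGen _ _).1 (hH.preconnected _ _))
  intro y hy
  induction hy with
  | refl => exact hxA
  | tail _ hbc ih => exact hA ih hbc

end Subgraph

end SimpleGraph

lemma Cwalk_isCycle : Cwalk.IsCycle := by
  rw [Walk.isCycle_def, Walk.isTrail_def]
  exact ⟨by decide, by simp [Cwalk], by decide⟩

namespace Hhat

open Subgraph

variable {H : Hhat.Subgraph}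

lemma ncard_neighborSet_le_two_of_ten_le {v : Fin 15} (hv : 10 ≤ v) :
    (Hhat.neighborSet v).ncard ≤ 2 := by
  rw [← coe_neighborFinset, Set.ncard_coe_finset, card_neighborFinset_eq_degree]
  revert v
  decide

lemma adj_of_ten_le (hH : H.IsTwoRegular) {v z : Fin 15} (hv : v ∈ H.verts) (h10 : 10 ≤ v)
    (h : Hhat.Adj v z) : H.Adj v z :=
  hH.adj_of_ncard_neighborSet_le_two hv (ncard_neighborSet_le_two_of_ten_le h10) h

lemma neighborSet_eight_nine (hH : H.IsTwoRegular) (hverts : ∀ v : Fin 15, 8 ≤ v → v ∈ H.verts) :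
    H.neighborSet 8 = {10, 11} ∧ H.neighborSet 9 = {12, 13} := by
  have pendant (v z : Fin 15) (h10 : 10 ≤ v) (h : Hhat.Adj v z) : H.Adj z v :=
    (adj_of_ten_le hH (hverts v (le_trans (by decide) h10)) h10 h).symm
  exact ⟨hH.neighborSet_eq_pair_of_adj (by decide)
      (pendant 10 8 (by decide) (by decide)) (pendant 11 8 (by decide) (by decide)),
    hH.neighborSet_eq_pair_of_adj (by decide)
      (pendant 12 9 (by decide) (by decide)) (pendant 13 9 (by decide) (by decide))⟩

theorem not_isTwoRegular_of_verts_eq_compl_three (hverts : H.verts = {3}ᶜ) :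
    ¬ H.IsTwoRegular := by
  intro hH
  have hmem (v : Fin 15) (hv : v ≠ 3) : v ∈ H.verts := hverts ▸ hv
  have hne {x z : Fin 15} (h : H.Adj x z) : z ≠ 3 := by simpa [hverts] using h.snd_mem
  obtain ⟨hN8, hN9⟩ := neighborSet_eight_nine hH fun v hv =>
    hmem v (ne_of_gt (lt_of_lt_of_le (by decide) hv))
  have hN2 : H.neighborSet 2 = {1, 7} :=
    hH.neighborSet_eq_pair_of_forall_adj (hmem 2 (by decide)) (by decide) fun z hz =>
      (by decide : ∀ z : Fin 15, Hhat.Adj 2 z → z ≠ 3 → z ≠ 8 → z ≠ 9 → z = 1 ∨ z = 7) z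
        hz.adj_sub (hne hz) (hz.ne_of_neighborSet_eq_pair hN8 (by decide) (by decide))
        (hz.ne_of_neighborSet_eq_pair hN9 (by decide) (by decide))
  have hN1 : H.neighborSet 1 = {12, 2} :=
    hH.neighborSet_eq_pair_of_adj (by decide)
      (adj_of_ten_le hH (hmem 12 (by decide)) (by decide) (by decide)).symm
      (adj_of_neighborSet_eq_pair hN2).1.symm
  have hN0 : H.neighborSet 0 = {7, 10} :=
    hH.neighborSet_eq_pair_of_forall_adj (hmem 0 (by decide)) (by decide) fun z hz =>
      (by decide : ∀ z : Fin 15, Hhat.Adj 0 z → z ≠ 1 → z ≠ 8 → z ≠ 9 → z = 7 ∨ z = 10) z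
        hz.adj_sub (hz.ne_of_neighborSet_eq_pair hN1 (by decide) (by decide))
        (hz.ne_of_neighborSet_eq_pair hN8 (by decide) (by decide))
        (hz.ne_of_neighborSet_eq_pair hN9 (by decide) (by decide))
  have hN7 : H.neighborSet 7 = {14, 2} :=
    hH.neighborSet_eq_pair_of_adj (by decide)
      (adj_of_ten_le hH (hmem 14 (by decide)) (by decide) (by decide)).symm
      (adj_of_neighborSet_eq_pair hN2).2.symm
  exact (adj_of_neighborSet_eq_pair hN0).1.ne_of_neighborSet_eq_pair hN7 (by decide) (by decide) rfl

theorem not_isTwoRegular_of_connected_of_verts_eq_compl_two (hconn : H.Connected)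
    (hverts : H.verts = {2}ᶜ) : ¬ H.IsTwoRegular := by
  intro hH
  have hmem (v : Fin 15) (hv : v ≠ 2) : v ∈ H.verts := hverts ▸ hv
  have hne {x z : Fin 15} (h : H.Adj x z) : z ≠ 2 := by simpa [hverts] using h.snd_mem
  obtain ⟨hN8, hN9⟩ := neighborSet_eight_nine hH fun v hv =>
    hmem v (ne_of_gt (lt_of_lt_of_le (by decide) hv))
  have hN3 : H.neighborSet 3 = {4, 7} :=
    hH.neighborSet_eq_pair_of_forall_adj (hmem 3 (by decide)) (by decide) fun z hz =>
      (by decide : ∀ z : Fin 15, Hhat.Adj 3 z → z ≠ 2 → z ≠ 8 → z ≠ 9 → z = 4 ∨ z = 7) z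
        hz.adj_sub (hne hz) (hz.ne_of_neighborSet_eq_pair hN8 (by decide) (by decide))
        (hz.ne_of_neighborSet_eq_pair hN9 (by decide) (by decide))
  have h14 (z : Fin 15) (h : Hhat.Adj 14 z) : H.Adj 14 z :=
    adj_of_ten_le hH (hmem 14 (by decide)) (by decide) h
  have hN14 : H.neighborSet 14 = {4, 7} :=
    hH.neighborSet_eq_pair_of_adj (by decide) (h14 4 (by decide)) (h14 7 (by decide))
  have hN4 : H.neighborSet 4 = {14, 3} :=
    hH.neighborSet_eq_pair_of_adj (by decide) (h14 4 (by decide)).symm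
      (adj_of_neighborSet_eq_pair hN3).1.symm
  have hN7 : H.neighborSet 7 = {14, 3} :=
    hH.neighborSet_eq_pair_of_adj (by decide) (h14 7 (by decide)).symm
      (adj_of_neighborSet_eq_pair hN3).2.symm
  have hclosed : ∀ ⦃a b : Fin 15⦄, a ∈ ({3, 4, 7, 14} : Set (Fin 15)) → H.Adj a b →
      b ∈ ({3, 4, 7, 14} : Set (Fin 15)) := by
    rintro a b (rfl | rfl | rfl | rfl) (hab : b ∈ H.neighborSet _) <;>
      [rw [hN3] at hab; rw [hN4] at hab; rw [hN7] at hab; rw [hN14] at hab] <;>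
      rcases hab with rfl | rfl <;> simp
  have h0 := hconn.verts_subset_of_adj_closed hclosed (hmem 3 (by decide)) (by simp)
    (hmem 0 (by decide))
  revert h0
  decide

end Hhat

/-- The cycle `C = a v₁ u₂ v₂ g u₁ v₅ e f v₄ u₃ v₃ b a` in `Ĥ` is a cycle and is
not extendable: there is no cycle in `Ĥ` on the vertex set `V(C) ∪ {w}` for any
vertex `w ∉ V(C)`. -/
theorem stmt17 : Cwalk.IsCycle ∧ ¬ CycleExtendable Hhat Cwalk := by
  refine ⟨Cwalk_isCycle, ?_⟩
  rintro ⟨w, u, c, hc, hw, hsupp⟩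
  have hverts (v : Fin 15) (hwv : ∀ y, (y ∈ Cwalk.support ∨ y = w) ↔ y ≠ v) :
      c.toSubgraph.verts = {v}ᶜ := by
    ext y
    simp [Walk.verts_toSubgraph, hsupp, hwv]
  rcases (by decide : ∀ w : Fin 15, w ∉ Cwalk.support → w = 2 ∨ w = 3) w hw with rfl | rfl
  · exact Hhat.not_isTwoRegular_of_verts_eq_compl_three (hverts 3 (by decide))
      hc.isTwoRegular_toSubgraph
  · exact Hhat.not_isTwoRegular_of_connected_of_verts_eq_compl_two c.toSubgraph_connected
      (hverts 2 (by decide)) hc.isTwoRegular_toSubgraph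
end
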